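/- arXiv:2502.20032 — 2 statements merged into one kernel-verified Lean document; each statement's English description precedes it below -/
import Mathlib

section
/- For a finite simple graph G that is connected, not complete, and not an odd cycle, the chromatic number of G is at most the maximum degree Δ(G). -/
/-!
Lovász's proof. Colour greedily in order of decreasing distance to a root `r`: every vertex other
than `r` still has an uncoloured neighbour when its turn comes, so `Δ` colours suffice as soon as
`r` sees fewer than `Δ` colours. This settles graphs with a vertex of degree `< Δ`, and graphs with
a cut vertex `w`: colour both sides, each rooted at `w` (which has a neighbour on the other side),
and permute the colours of one side to agree at `w`. Otherwise `G` is `Δ`-regular and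
`2`-connected. Not being complete, `G` contains an induced path `x - v - b`, so `Δ ≥ 2`; if `Δ = 2`
then `G` is a cycle, hence an even one. If `Δ ≥ 3`, find a path `a - v - b` with `a ≁ b` and
`G - a - b` connected, give `a` and `b` the same colour and root the greedy colouring at `v`, which
then sees at most `Δ - 1` colours. The induced path `x - v - b` will do if `G - x` is
`2`-connected; otherwise take the neighbours `a`, `b` of `x` in two disjoint end components of
`G - x`.
-/

open Finset

namespace SimpleGraph

variable {V α β : Type*} {G : SimpleGraph V} {s t H : Set V} {r u v w z : V}

def ReachableIn (G : SimpleGraph V) (s : Set V) (u v : V) : Prop :=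
  ∃ p : G.Walk u v, ∀ x ∈ p.support, x ∈ s

def PreconnectedIn (G : SimpleGraph V) (s : Set V) : Prop :=
  ∀ u ∈ s, ∀ v ∈ s, G.ReachableIn s u v

def componentIn (G : SimpleGraph V) (s : Set V) (c : V) : Set V :=
  {u | G.ReachableIn s c u}

namespace ReachableIn

lemma mem_right (h : G.ReachableIn s u v) : v ∈ s :=
  let ⟨p, hp⟩ := h; hp _ p.end_mem_support

lemma refl (h : u ∈ s) : G.ReachableIn s u u :=
  ⟨.nil, by simpa using h⟩

lemma symm (h : G.ReachableIn s u v) : G.ReachableIn s v u :=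
  let ⟨p, hp⟩ := h; ⟨p.reverse, by simpa using hp⟩

lemma trans (h : G.ReachableIn s u v) (h' : G.ReachableIn s v w) : G.ReachableIn s u w := by
  obtain ⟨p, hp⟩ := h
  obtain ⟨q, hq⟩ := h'
  exact ⟨p.append q, by simpa [Walk.mem_support_append_iff, or_imp, forall_and] using ⟨hp, hq⟩⟩

lemma mono (hst : s ⊆ t) (h : G.ReachableIn s u v) : G.ReachableIn t u v :=
  let ⟨p, hp⟩ := h; ⟨p, fun x hx => hst (hp x hx)⟩

end ReachableIn

lemma Adj.reachableIn (h : G.Adj u v) (hu : u ∈ s) (hv : v ∈ s) : G.ReachableIn s u v :=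
  ⟨h.toWalk, by simp [hu, hv]⟩

lemma Connected.reachableIn_univ (hG : G.Connected) (u v : V) : G.ReachableIn Set.univ u v :=
  ⟨(hG u v).some, fun _ _ => trivial⟩

lemma ReachableIn.exit {C : Set V} (hC : ∀ p ∈ C, ∀ q ∈ s, G.Adj p q → q ∈ C ∨ q = z)
    (h : G.ReachableIn s u v) (hu : u ∈ C) :
    G.ReachableIn (insert z C) u z ∨ G.ReachableIn C u v := by
  obtain ⟨p, hp⟩ := h
  induction p with
  | nil => exact .inr (.refl hu)
  | @cons u y v hadj q ih =>
    simp only [Walk.support_cons, List.mem_cons, forall_eq_or_imp] at hp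
    rcases hC u hu y (hp.2 y q.start_mem_support) hadj with hy | rfl
    · rcases ih hy hp.2 with h | h
      · exact .inl ((hadj.reachableIn (.inr hu) (.inr hy)).trans h)
      · exact .inr ((hadj.reachableIn hu hy).trans h)
    · exact .inl (hadj.reachableIn (.inr hu) (.inl rfl))

lemma Connected.reachableIn_insert (hG : G.Connected) {X : Set V}
    (hX : ∀ y ∈ X, ∀ z, G.Adj y z → z ∈ X ∨ z = w) :
    ∀ y ∈ insert w X, G.ReachableIn (insert w X) y w := by
  rintro y (rfl | hy)
  · exact .refl (.inl rfl)
  · exact ((hG.reachableIn_univ y w).exit (fun p hp q _ => hX p hp q) hy).elim id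
      (ReachableIn.mono (Set.subset_insert _ _))

lemma ReachableIn.exists_adj_of_ne (h : G.ReachableIn s u v) (huv : u ≠ v) :
    ∃ t ∈ s, t ≠ v ∧ G.Adj t v := by
  obtain ⟨p, hp⟩ := h.symm
  cases p with
  | nil => exact absurd rfl huv
  | cons hadj q => exact ⟨_, hp _ (by simp), hadj.ne.symm, hadj.symm⟩

lemma componentIn_subset {c : V} : G.componentIn s c ⊆ s :=
  fun _ h => ReachableIn.mem_right h

lemma mem_componentIn_self {c : V} (h : c ∈ s) : c ∈ G.componentIn s c :=
  ReachableIn.refl h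

lemma mem_componentIn_of_adj {c : V} (hu : u ∈ G.componentIn s c) (huv : G.Adj u v) (hv : v ∈ s) :
    v ∈ G.componentIn s c :=
  ReachableIn.trans hu (huv.reachableIn (componentIn_subset hu) hv)

def ProperOn (G : SimpleGraph V) (f : V → α) (s : Set V) : Prop :=
  ∀ u ∈ s, ∀ v ∈ s, G.Adj u v → f u ≠ f v

lemma ProperOn.update_insert [DecidableEq V] {f : V → α} (hf : G.ProperOn f s) (hv : v ∉ s)
    {c : α} (hc : ∀ u ∈ s, G.Adj v u → f u ≠ c) :
    G.ProperOn (Function.update f v c) (insert v s) := by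
  have hne : ∀ u ∈ s, u ≠ v := fun u hu h => hv (h ▸ hu)
  rintro x (rfl | hx) y (rfl | hy) hxy
  · exact absurd rfl hxy.ne
  · simpa [hne y hy] using (hc y hy hxy).symm
  · simpa [hne x hx] using hc x hx hxy.symm
  · simpa [hne x hx, hne y hy] using hf x hx y hy hxy

lemma ProperOn.comp_injective {f : V → α} (hf : G.ProperOn f s) {σ : α → β}
    (hσ : σ.Injective) : G.ProperOn (σ ∘ f) s :=
  fun x hx y hy hxy h => hf x hx y hy hxy (hσ h)

lemma ProperOn.piecewise {C : Set V} [DecidablePred (· ∈ C)] {f g : V → α}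
    (hf : G.ProperOn f (insert w C)) (hg : G.ProperOn g Cᶜ) (hfg : f w = g w)
    (hC : ∀ y ∈ C, ∀ z ∉ C, G.Adj y z → z = w) : G.ProperOn (C.piecewise f g) Set.univ := by
  intro x _ y _ hxy
  by_cases hx : x ∈ C <;> by_cases hy : y ∈ C <;>
    simp only [Set.piecewise, hx, hy, if_true, if_false]
  · exact hf x (.inr hx) y (.inr hy) hxy
  · obtain rfl := hC x hx y hy hxy
    exact hfg ▸ hf x (.inr hx) y (.inl rfl) hxy
  · obtain rfl := hC y hy x hx hxy.symm
    exact hfg ▸ hf x (.inl rfl) y (.inr hy) hxy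
  · exact hg x hx y hy hxy

lemma colorable_of_properOn_univ [Fintype α] {f : V → α}
    (hf : G.ProperOn f Set.univ) : G.Colorable (Fintype.card α) :=
  (Coloring.mk f fun h => hf _ trivial _ trivial h).colorable

section Greedy

variable [DecidableEq V] [DecidableEq α]

lemma card_image_update_add_card_filter_le (d : V → ℕ) (f : V → α) (c : α) {a x : V}
    {N s U : Finset V} (has : a ∉ s) (haU : a ∉ U) (hxa : d x ≤ d a) :
    #((N ∩ insert a s).image (Function.update f a c)) + #{w ∈ N ∩ U | d x ≤ d w} ≤
      #((N ∩ s).image f) + #{w ∈ N ∩ insert a U | d x ≤ d w} := by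
  by_cases haN : a ∈ N
  · have h₁ : (N ∩ insert a s).image (Function.update f a c) ⊆ insert c ((N ∩ s).image f) := by
      intro y hy
      obtain ⟨u, hu, rfl⟩ := mem_image.mp hy
      rcases eq_or_ne u a with rfl | hua
      · simp
      · exact mem_insert_of_mem (mem_image.mpr ⟨u, by simp_all, by simp [hua]⟩)
    have h₂ : #{w ∈ N ∩ insert a U | d x ≤ d w} = #{w ∈ N ∩ U | d x ≤ d w} + 1 := by
      rw [inter_insert_of_mem haN, filter_insert, if_pos hxa, card_insert_of_notMem]
      simp [haU]
    have := (card_le_card h₁).trans (card_insert_le _ _)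
    omega
  · have h₁ : (N ∩ insert a s).image (Function.update f a c) = (N ∩ s).image f := by
      rw [inter_insert_of_notMem haN]
      exact image_congr fun u hu => by
        simp only [coe_inter, Set.mem_inter_iff, mem_coe] at hu
        simp [show u ≠ a from fun h => has (h ▸ hu.2)]
    rw [h₁, inter_insert_of_notMem haN]

variable [Fintype V] [DecidableRel G.Adj] [Fintype α]

/-- Colour `U` greedily in order of decreasing `d`: the bound says that `u` sees fewer than
`|α|` colours when its turn comes. -/
theorem exists_properOn_union_of_card_lt (d : V → ℕ) (U : Finset V) :
    ∀ (s : Finset V) (f : V → α), Disjoint s U → G.ProperOn f s →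
      (∀ u ∈ U, #((G.neighborFinset u ∩ s).image f) +
        #{w ∈ G.neighborFinset u ∩ U | d u ≤ d w} < Fintype.card α) →
      ∃ g : V → α, G.ProperOn g ↑(s ∪ U) := by
  induction U using Finset.induction_on_max_value d with
  | empty => exact fun s f _ hf _ => ⟨f, by simpa using hf⟩
  | insert a U haU hmax ih =>
    intro s f hdisj hf hcount
    have has : a ∉ s := fun h => Finset.disjoint_left.mp hdisj h (mem_insert_self a U)
    obtain ⟨c, -, hc⟩ := exists_mem_notMem_of_card_lt_card (t := univ)
      (s := (G.neighborFinset a ∩ s).image f)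
      (by simpa using (Nat.le_add_right _ _).trans_lt (hcount a (mem_insert_self a U)))
    have hf' : G.ProperOn (Function.update f a c) ↑(insert a s) := by
      rw [coe_insert]
      refine hf.update_insert (by exact_mod_cast has) fun u hu hau h => hc ?_
      exact mem_image.mpr ⟨u, mem_inter.mpr ⟨by simpa using hau, by exact_mod_cast hu⟩, h⟩
    obtain ⟨g, hg⟩ := ih (insert a s) _
      (disjoint_insert_left.mpr ⟨haU, hdisj.mono_right (subset_insert _ _)⟩) hf' fun x hx =>
        (card_image_update_add_card_filter_le d f c has haU (hmax x hx)).trans_lt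
          (hcount x (mem_insert_of_mem hx))
    exact ⟨g, by simpa [insert_union, union_insert] using hg⟩

end Greedy

/-- The potential is the length of a shortest walk to `r` inside `s`. -/
lemma exists_descent_of_reachableIn (h : ∀ u ∈ s, G.ReachableIn s u r) :
    ∃ d : V → ℕ, ∀ u ∈ s, u ≠ r → ∃ w ∈ s, G.Adj u w ∧ d w < d u := by
  classical
  have hex (u : V) (hu : u ∈ s) :
      ∃ n, ∃ p : G.Walk u r, (∀ x ∈ p.support, x ∈ s) ∧ p.length = n :=
    let ⟨p, hp⟩ := h u hu; ⟨_, p, hp, rfl⟩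
  refine ⟨fun u => if hu : u ∈ s then Nat.find (hex u hu) else 0, fun u hu hur => ?_⟩
  obtain ⟨p, hp, hlen⟩ := Nat.find_spec (hex u hu)
  cases p with
  | nil => exact absurd rfl hur
  | cons hadj q =>
    simp only [Walk.support_cons, List.mem_cons, forall_eq_or_imp] at hp
    have hw := hp.2 _ q.start_mem_support
    refine ⟨_, hw, hadj, ?_⟩
    have := Nat.find_min' (hex _ hw) ⟨q, hp.2, rfl⟩
    simp only [dif_pos hw, dif_pos hu, Walk.length_cons] at this hlen ⊢
    omega

section Rooted

variable [Fintype V] [DecidableEq V] [DecidableRel G.Adj] [Fintype α] [DecidableEq α]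

lemma card_neighborFinset_inter_lt {U : Finset V} {x : V}
    (hadj : G.Adj w x) (hx : x ∉ U) : #(G.neighborFinset w ∩ U) < G.degree w := by
  rw [← card_neighborFinset_eq_degree]
  exact card_lt_card ⟨inter_subset_left, fun h => hx (mem_inter.mp (h (by simpa using hadj))).2⟩

theorem exists_properOn_union_of_reachableIn {f : V → α} {s U : Finset V}
    (hf : G.ProperOn f s) (hsU : Disjoint s U) (hreach : ∀ u ∈ U, G.ReachableIn U u r)
    (hdeg : ∀ u ∈ U,
      #((G.neighborFinset u ∩ s).image f) + #(G.neighborFinset u ∩ U) ≤ Fintype.card α)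
    (hr : #((G.neighborFinset r ∩ s).image f) + #(G.neighborFinset r ∩ U) < Fintype.card α) :
    ∃ g : V → α, G.ProperOn g ↑(s ∪ U) := by
  obtain ⟨d, hd⟩ := exists_descent_of_reachableIn hreach
  refine exists_properOn_union_of_card_lt d U s f hsU hf fun u hu => ?_
  rcases eq_or_ne u r with rfl | hur
  · exact (Nat.add_le_add_left (card_le_card (filter_subset _ _)) _).trans_lt hr
  obtain ⟨w, hwU, hadj, hlt⟩ := hd u (by exact_mod_cast hu) hur
  have hw : w ∈ G.neighborFinset u ∩ U := by simpa [hadj] using hwU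
  have hsub : {x ∈ G.neighborFinset u ∩ U | d u ≤ d x} ⊆ (G.neighborFinset u ∩ U).erase w :=
    fun x hx => by
      simp only [mem_filter] at hx
      exact mem_erase.mpr ⟨by rintro rfl; omega, hx.1⟩
  have := card_le_card hsub
  rw [card_erase_of_mem hw] at this
  have := card_pos.mpr ⟨w, hw⟩
  have := hdeg u hu
  omega

theorem exists_properOn_of_reachableIn {U : Finset V} (hreach : ∀ u ∈ U, G.ReachableIn U u r)
    (hdeg : ∀ u ∈ U, #(G.neighborFinset u ∩ U) ≤ Fintype.card α)
    (hr : #(G.neighborFinset r ∩ U) < Fintype.card α) : ∃ g : V → α, G.ProperOn g U := by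
  obtain ⟨c⟩ : Nonempty α := Fintype.card_pos_iff.mp (by omega)
  simpa using exists_properOn_union_of_reachableIn (f := fun _ => c) (s := ∅)
    (by simp [ProperOn]) (disjoint_empty_left U) hreach (by simpa using hdeg) (by simpa using hr)

end Rooted

section Colorable

variable [Fintype V] [DecidableRel G.Adj] {k : ℕ}

theorem Connected.colorable_of_degree_lt (hG : G.Connected) (hdeg : ∀ v, G.degree v ≤ k)
    (hr : G.degree r < k) : G.Colorable k := by
  classical
  obtain ⟨g, hg⟩ := exists_properOn_of_reachableIn (α := Fin k) (U := univ) (r := r)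
    (fun u _ => by simpa using hG.reachableIn_univ u r) (fun u _ => by simpa using hdeg u)
    (by simpa using hr)
  simpa using colorable_of_properOn_univ (f := g) (by simpa using hg)

theorem Connected.colorable_of_not_reachableIn (hG : G.Connected) (hdeg : ∀ v, G.degree v ≤ k)
    (hu : u ≠ w) (hv : v ≠ w) (huv : ¬ G.ReachableIn {w}ᶜ u v) : G.Colorable k := by
  classical
  set C := G.componentIn {w}ᶜ u
  have hwC : w ∈ Cᶜ := fun h => componentIn_subset h rfl
  have hC : ∀ y ∈ C, ∀ z, G.Adj y z → z ∈ C ∨ z = w := fun y hy z hyz =>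
    or_iff_not_imp_right.mpr fun hz => mem_componentIn_of_adj hy hyz hz
  have h1 := hG.reachableIn_insert hC
  have h2 := hG.reachableIn_insert (X := Cᶜ \ {w}) fun y hy z hyz => or_iff_not_imp_right.mpr
    fun hz => ⟨fun hzC => hy.1 ((hC z hzC y hyz.symm).resolve_right hy.2), hz⟩
  rw [Set.insert_sdiff_singleton, Set.insert_eq_of_mem hwC] at h2
  obtain ⟨t₁, ht₁, ht₁w, ht₁adj⟩ := (h1 u (.inr (mem_componentIn_self hu))).exists_adj_of_ne hu
  obtain ⟨t₂, ht₂, ht₂w, ht₂adj⟩ := (h2 v huv).exists_adj_of_ne hv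
  have hdeg' (U : Finset V) (y : V) : #(G.neighborFinset y ∩ U) ≤ Fintype.card (Fin k) :=
    (card_le_card inter_subset_left).trans (by simpa using hdeg y)
  have hr₁ : #(G.neighborFinset w ∩ (insert w C).toFinset) < Fintype.card (Fin k) :=
    (card_neighborFinset_inter_lt ht₂adj.symm (by simpa [ht₂w] using ht₂)).trans_le
      (by simpa using hdeg w)
  have hr₂ : #(G.neighborFinset w ∩ Cᶜ.toFinset) < Fintype.card (Fin k) :=
    (card_neighborFinset_inter_lt ht₁adj.symm (by simpa [ht₁w] using ht₁)).trans_le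
      (by simpa using hdeg w)
  obtain ⟨f, hf⟩ := exists_properOn_of_reachableIn (by simpa using h1) (fun y _ => hdeg' _ y) hr₁
  obtain ⟨g, hg⟩ := exists_properOn_of_reachableIn (by simpa using h2) (fun y _ => hdeg' _ y) hr₂
  rw [Set.coe_toFinset] at hf hg
  simpa using colorable_of_properOn_univ <| hf.piecewise
    (hg.comp_injective (Equiv.swap (g w) (f w)).injective) (by simp)
    fun y hy z hz hyz => (hC y hy z hyz).resolve_left hz

theorem colorable_of_reachableIn_compl_pair {a b : V} (hdeg : ∀ u, G.degree u ≤ k) (hva : G.Adj v a)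
    (hvb : G.Adj v b) (hab : a ≠ b) (hnab : ¬ G.Adj a b)
    (hreach : ∀ u ∈ ({a, b} : Set V)ᶜ, G.ReachableIn {a, b}ᶜ u v) :
    G.Colorable k := by
  classical
  have hsub : ({a, b} : Finset V) ⊆ G.neighborFinset v := by simp [insert_subset_iff, hva, hvb]
  have hv : #(G.neighborFinset v ∩ {a, b}ᶜ) + 2 = G.degree v := by
    rw [← sdiff_eq_inter_compl, ← card_pair hab, card_sdiff_add_card_eq_card hsub,
      card_neighborFinset_eq_degree]
  have hk := hdeg v
  let c : Fin k := ⟨0, by omega⟩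
  have hf : G.ProperOn (fun _ => c) ↑({a, b} : Finset V) := by
    simp only [coe_insert, coe_singleton]
    rintro x (rfl | rfl) y (rfl | rfl) hxy <;> simp_all [hxy.ne, hxy.symm]
  have hU : ((({a, b} : Finset V)ᶜ : Finset V) : Set V) = ({a, b} : Set V)ᶜ := by
    ext; simp [and_comm]
  have hdeg' (u : V) : #((G.neighborFinset u ∩ {a, b}).image fun _ => c) +
      #(G.neighborFinset u ∩ {a, b}ᶜ) ≤ Fintype.card (Fin k) :=
    calc _ ≤ #(G.neighborFinset u ∩ {a, b}) + #(G.neighborFinset u ∩ {a, b}ᶜ) :=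
          Nat.add_le_add_right card_image_le _
      _ = G.degree u := by
        rw [← sdiff_eq_inter_compl, card_inter_add_card_sdiff, card_neighborFinset_eq_degree]
      _ ≤ _ := by simpa using hdeg u
  have hr : #((G.neighborFinset v ∩ {a, b}).image fun _ => c) +
      #(G.neighborFinset v ∩ {a, b}ᶜ) < Fintype.card (Fin k) := by
    have : #((G.neighborFinset v ∩ {a, b}).image fun _ => c) ≤ 1 :=
      (card_le_card (image_subset_iff.mpr fun _ _ => mem_singleton_self c)).trans_eq
        (card_singleton c)
    simp only [Fintype.card_fin]
    omega
  obtain ⟨g, hg⟩ := exists_properOn_union_of_reachableIn hf disjoint_compl_right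
    (fun u hu => hU ▸ hreach u (by simpa [← hU, and_comm] using hu)) (fun u _ => hdeg' u) hr
  rw [union_compl, coe_univ] at hg
  simpa using colorable_of_properOn_univ hg

lemma two_le_degree_of_adj {a b : V} (hva : G.Adj v a) (hvb : G.Adj v b) (hab : a ≠ b) :
    2 ≤ G.degree v := by
  classical
  rw [← card_neighborFinset_eq_degree, ← card_pair hab]
  exact card_le_card (by simp [insert_subset_iff, hva, hvb])

end Colorable

def Separates (G : SimpleGraph V) (H : Set V) (z c : V) : Prop :=
  z ∈ H ∧ c ∈ H \ {z} ∧ ∃ t ∈ H \ {z}, ¬ G.ReachableIn (H \ {z}) c t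

lemma PreconnectedIn.exists_adj_mem_componentIn {x c : V} (hs : G.PreconnectedIn s) (hx : x ∈ s)
    (hc : c ∈ s \ {x}) : ∃ a ∈ G.componentIn (s \ {x}) c, G.Adj a x := by
  have hC : ∀ p ∈ G.componentIn (s \ {x}) c, ∀ q ∈ s, G.Adj p q →
      q ∈ G.componentIn (s \ {x}) c ∨ q = x := fun p hp q hq hpq =>
    or_iff_not_imp_right.mpr fun hqx => mem_componentIn_of_adj hp hpq ⟨hq, hqx⟩
  have h := ((hs c hc.1 x hx).exit hC (mem_componentIn_self hc)).resolve_right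
    fun h => (componentIn_subset h.mem_right).2 rfl
  obtain ⟨a, ha, hax, hadj⟩ := h.exists_adj_of_ne hc.2
  exact ⟨a, ha.resolve_left hax, hadj⟩

lemma Separates.exists_adj_mem_componentIn {x c : V} (h : G.Separates {x}ᶜ z c)
    (hz : G.PreconnectedIn {z}ᶜ) : ∃ a ∈ G.componentIn ({x}ᶜ \ {z}) c, G.Adj a x := by
  have hs : ({z}ᶜ \ {x} : Set V) = {x}ᶜ \ {z} := by ext; simp [and_comm]
  simpa [hs] using hz.exists_adj_mem_componentIn (Ne.symm h.1) (hs ▸ h.2.1)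

lemma PreconnectedIn.reachableIn_diff_componentIn {c y : V} (hH : G.PreconnectedIn H) (hz : z ∈ H)
    (hy : y ∈ H \ G.componentIn (H \ {z}) c) :
    G.ReachableIn (H \ G.componentIn (H \ {z}) c) y z := by
  set C := G.componentIn (H \ {z}) c
  have hzC : z ∉ C := fun h => (componentIn_subset h).2 rfl
  rcases eq_or_ne y z with rfl | hyz
  · exact .refl hy
  have hR : ∀ p ∈ (H \ C) \ {z}, ∀ q ∈ H, G.Adj p q → q ∈ (H \ C) \ {z} ∨ q = z :=
    fun p hp q hq hpq => or_iff_not_imp_right.mpr fun hqz =>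
      ⟨⟨hq, fun hqC => hp.1.2 (mem_componentIn_of_adj hqC hpq.symm ⟨hp.1.1, hp.2⟩)⟩, hqz⟩
  refine ((hH y hy.1 z hz).exit hR ⟨hy, hyz⟩).resolve_right (fun h => h.mem_right.2 rfl) |>.mono ?_
  rintro x (rfl | hx)
  exacts [⟨hz, hzC⟩, hx.1]

/-- A component `C` of `H - z` of minimal size contains no cut vertex of `H`: a component of
`H - a` avoiding `z` for some `a ∈ C` would be a smaller one. -/
theorem PreconnectedIn.exists_separates_forall_reachableIn [Finite V] (hH : G.PreconnectedIn H)
    {A : Set V} (h : ∃ z c, G.Separates H z c ∧ Disjoint (G.componentIn (H \ {z}) c) A) :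
    ∃ z c, G.Separates H z c ∧ Disjoint (G.componentIn (H \ {z}) c) A ∧
      ∀ a ∈ G.componentIn (H \ {z}) c, ∀ u ∈ H \ {a}, G.ReachableIn (H \ {a}) u z := by
  obtain ⟨⟨z, c⟩, ⟨hsep, hA⟩, hmin⟩ := Set.exists_min_image
    {p : V × V | G.Separates H p.1 p.2 ∧ Disjoint (G.componentIn (H \ {p.1}) p.2) A}
    (fun p => (G.componentIn (H \ {p.1}) p.2).ncard) (Set.toFinite _)
    (let ⟨z, c, h⟩ := h; ⟨(z, c), h⟩)
  refine ⟨z, c, hsep, hA, fun a ha u hu => ?_⟩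
  by_contra hu'
  have haz : a ∈ H \ {z} := componentIn_subset ha
  have hDC : G.componentIn (H \ {a}) u ⊆ G.componentIn (H \ {z}) c := fun y hy => by
    by_contra hyC
    refine hu' (ReachableIn.trans hy ?_)
    refine (hH.reachableIn_diff_componentIn hsep.1 ⟨(componentIn_subset hy).1, hyC⟩).mono ?_
    exact fun x hx => ⟨hx.1, fun hxa => hx.2 ((Set.mem_singleton_iff.mp hxa) ▸ ha)⟩
  have hlt := Set.ncard_lt_ncard ((Set.ssubset_iff_of_subset hDC).mpr
    ⟨a, ha, fun h => (componentIn_subset h).2 rfl⟩)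
  have := hmin (a, u) ⟨⟨haz.1, hu, z, ⟨hsep.1, fun h => haz.2 h.symm⟩, hu'⟩, hA.mono_left hDC⟩
  exact absurd this (not_le.mpr hlt)

lemma reachableIn_diff_pair {a b z₁ z₂ c : V}
    (ha : ∀ u ∈ H \ {a}, G.ReachableIn (H \ {a}) u z₁)
    (hb : ∀ u ∈ H \ {b}, G.ReachableIn (H \ {b}) u z₂) (hz₂ : z₂ ∈ H) (haz₂ : a ≠ z₂)
    (hbC : b ∈ G.componentIn (H \ {z₂}) c) (haC : a ∉ G.componentIn (H \ {z₂}) c)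
    (hz₁C : z₁ ∉ G.componentIn (H \ {z₂}) c) :
    ∀ u ∈ H \ {a, b}, G.ReachableIn (H \ {a, b}) u z₁ := by
  set C := G.componentIn (H \ {z₂}) c
  have hz₂C : z₂ ∉ C := fun h => (componentIn_subset h).2 rfl
  have hbH : b ∈ H \ {z₂} := componentIn_subset hbC
  have hz₁ : z₁ ∈ H \ {a} := (ha z₂ ⟨hz₂, haz₂.symm⟩).mem_right
  have hz₂T : z₂ ∈ H \ {a, b} := ⟨hz₂, by rintro (h | h); exacts [haz₂ h.symm, hbH.2 h.symm]⟩
  -- outside `C`, walks avoiding `a` cannot meet `b ∈ C` before reaching `z₂`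
  set R := (H \ {a}) \ insert z₂ C
  have hR : ∀ p ∈ R, ∀ q ∈ H \ {a}, G.Adj p q → q ∈ R ∨ q = z₂ := fun p hp q hq hpq =>
    or_iff_not_imp_right.mpr fun hqz₂ => ⟨hq, fun hq' => hq'.elim hqz₂ fun hqC =>
      hp.2 (.inr (mem_componentIn_of_adj hqC hpq.symm ⟨hp.1.1, fun h => hp.2 (.inl h)⟩))⟩
  have hRT : insert z₂ R ⊆ H \ {a, b} := by
    rintro x (rfl | ⟨⟨hxH, hxa⟩, hx⟩)
    · exact hz₂T
    · exact ⟨hxH, by rintro (rfl | rfl) <;> simp_all⟩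
  have hz₂z₁ : G.ReachableIn (H \ {a, b}) z₂ z₁ := by
    rcases eq_or_ne z₁ z₂ with rfl | hz₁z₂
    · exact .refl hz₂T
    refine (((ha z₂ ⟨hz₂, haz₂.symm⟩).symm.exit hR ⟨hz₁, ?_⟩).resolve_right
      fun h => h.mem_right.2 (.inl rfl)).symm.mono hRT
    rintro (h | h)
    exacts [hz₁z₂ h, hz₁C h]
  intro u hu
  have hua : u ≠ a := fun h => hu.2 (.inl h)
  have hub : u ≠ b := fun h => hu.2 (.inr h)
  by_cases huC : u ∈ C
  · have hCb : ∀ p ∈ C \ {b}, ∀ q ∈ H \ {b}, G.Adj p q → q ∈ C \ {b} ∨ q = z₂ :=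
      fun p hp q hq hpq => or_iff_not_imp_right.mpr fun hqz₂ =>
        ⟨mem_componentIn_of_adj hp.1 hpq ⟨hq.1, hqz₂⟩, hq.2⟩
    refine (((hb u ⟨hu.1, hub⟩).exit hCb ⟨huC, hub⟩).resolve_right
      fun h => hz₂C h.mem_right.1).mono ?_ |>.trans hz₂z₁
    rintro x (rfl | ⟨hxC, hxb⟩)
    · exact hz₂T
    · exact ⟨(componentIn_subset hxC).1, by rintro (rfl | rfl) <;> simp_all⟩
  rcases eq_or_ne u z₂ with rfl | huz₂
  · exact hz₂z₁
  rcases (ha u ⟨hu.1, hua⟩).exit hR ⟨⟨hu.1, hua⟩, by rintro (h | h) <;> simp_all⟩ with h | h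
  · exact (h.mono hRT).trans hz₂z₁
  · exact h.mono ((Set.subset_insert _ _).trans hRT)

lemma Connected.exists_adj_adj_not_adj (hG : G.Connected) (hne : G ≠ ⊤) :
    ∃ x v b, G.Adj x v ∧ G.Adj v b ∧ ¬ G.Adj x b ∧ x ≠ b := by
  obtain ⟨x, y, hxy, hnadj⟩ := ne_top_iff_exists_not_adj.mp hne
  obtain ⟨p, hp⟩ := hG.exists_walk_length_eq_dist x y
  exact p.exists_adj_adj_not_adj_ne hp (hG.one_lt_dist_of_ne_of_not_adj hxy hnadj)

section Triple

variable [Fintype V] [DecidableRel G.Adj]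

/-- Lovász's choice of `a, b` when `G - x` has a cut vertex: take neighbours of `x` inside two
disjoint end components of `G - x`. -/
lemma exists_adj_adj_reachableIn_of_separates {x : V} (hcut : ∀ z, G.PreconnectedIn {z}ᶜ)
    (hx : 3 ≤ G.degree x) (hsep : ∃ z c, G.Separates {x}ᶜ z c) :
    ∃ a b, G.Adj x a ∧ G.Adj x b ∧ a ≠ b ∧ ¬ G.Adj a b ∧
      ∀ u ∈ ({a, b} : Set V)ᶜ, G.ReachableIn {a, b}ᶜ u x := by
  classical
  set H : Set V := {x}ᶜ
  have hH : G.PreconnectedIn H := hcut x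
  obtain ⟨z₁, c₁, hsep₁, -, hC₁⟩ := hH.exists_separates_forall_reachableIn (A := ∅)
    (let ⟨z, c, h⟩ := hsep; ⟨z, c, h, Set.disjoint_empty _⟩)
  obtain ⟨t₁, ht₁, hct₁⟩ := hsep₁.2.2
  set C₁ := G.componentIn (H \ {z₁}) c₁
  have hdisj₁ : Disjoint (G.componentIn (H \ {z₁}) t₁) (insert z₁ C₁) := by
    refine Set.disjoint_left.mpr fun y hy hy' => hy'.elim (fun h => ?_) fun h => ?_
    · exact (componentIn_subset hy).2 h
    · exact hct₁ (ReachableIn.trans h (ReachableIn.symm hy))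
  obtain ⟨z₂, c₂, hsep₂, hdisj, hC₂⟩ := hH.exists_separates_forall_reachableIn
    ⟨z₁, t₁, ⟨hsep₁.1, ht₁, c₁, hsep₁.2.1, fun h => hct₁ h.symm⟩, hdisj₁⟩
  set C₂ := G.componentIn (H \ {z₂}) c₂
  obtain ⟨a, haC₁, hax⟩ := hsep₁.exists_adj_mem_componentIn (hcut z₁)
  obtain ⟨b, hbC₂, hbx⟩ := hsep₂.exists_adj_mem_componentIn (hcut z₂)
  have haC₂ : a ∉ C₂ := fun h => Set.disjoint_left.mp hdisj h (.inr haC₁)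
  have hz₁C₂ : z₁ ∉ C₂ := fun h => Set.disjoint_left.mp hdisj h (.inl rfl)
  have haH : a ∈ H \ {z₁} := componentIn_subset haC₁
  have haz₂ : a ≠ z₂ := by
    rintro rfl
    exact hz₁C₂ (hC₁ a haC₁ c₂ hsep₂.2.1)
  have hab : ¬ G.Adj a b := fun h => haC₂ (mem_componentIn_of_adj hbC₂ h.symm ⟨haH.1, haz₂⟩)
  have hreach := reachableIn_diff_pair (hC₁ a haC₁) (hC₂ b hbC₂) hsep₂.1 haz₂ hbC₂ haC₂ hz₁C₂
  obtain ⟨t, ht, htab⟩ := exists_mem_notMem_of_card_lt_card (s := {a, b})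
    (t := G.neighborFinset x) (card_le_two.trans_lt (by rw [card_neighborFinset_eq_degree]; omega))
  have hxt : G.Adj x t := by simpa using ht
  have htT : t ∈ H \ {a, b} := ⟨hxt.ne.symm, by simpa using htab⟩
  have hT : H \ {a, b} ⊆ ({a, b} : Set V)ᶜ := Set.sdiff_subset_compl _ _
  refine ⟨a, b, hax.symm, hbx.symm, fun h => haC₂ (h ▸ hbC₂), hab, fun u hu => ?_⟩
  have hxT : x ∈ ({a, b} : Set V)ᶜ := by simp [hax.ne', hbx.ne']
  rcases eq_or_ne u x with rfl | hux
  · exact .refl hu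
  exact (((hreach u ⟨hux, hu⟩).trans (hreach t htT).symm).mono hT).trans
    (hxt.symm.reachableIn (hT htT) hxT)

theorem Connected.exists_adj_adj_reachableIn_compl_pair (hG : G.Connected) (hne : G ≠ ⊤)
    (hcut : ∀ z, G.PreconnectedIn {z}ᶜ) (hdeg : ∀ v, 3 ≤ G.degree v) :
    ∃ v a b, G.Adj v a ∧ G.Adj v b ∧ a ≠ b ∧ ¬ G.Adj a b ∧
      ∀ u ∈ ({a, b} : Set V)ᶜ, G.ReachableIn {a, b}ᶜ u v := by
  obtain ⟨x, v, b, hxv, hvb, hxb, hxb'⟩ := hG.exists_adj_adj_not_adj hne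
  by_cases hsep : ∃ z c, G.Separates {x}ᶜ z c
  · obtain ⟨a, b, h⟩ := exists_adj_adj_reachableIn_of_separates hcut (hdeg x) hsep
    exact ⟨x, a, b, h⟩
  refine ⟨v, x, b, hxv.symm, hvb, hxb', hxb, fun u hu => ?_⟩
  have hT : ({x, b} : Set V)ᶜ = {x}ᶜ \ {b} := by ext; simp [not_or]
  rw [hT] at hu ⊢
  by_contra h
  exact hsep ⟨b, u, hxb'.symm, hu, v, ⟨hxv.ne', hvb.ne⟩, h⟩

end Triple

theorem Copy.nonempty_iso_of_degree_le [Fintype V] [DecidableRel G.Adj] {W : Type*} [Fintype W]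
    [Nonempty W] {K : SimpleGraph W} [DecidableRel K.Adj] (f : Copy K G) (hG : G.Connected)
    (hdeg : ∀ w, G.degree (f w) ≤ K.degree w) : Nonempty (K ≃g G) := by
  have hN (w : W) : (K.neighborFinset w).map f.toEmbedding = G.neighborFinset (f w) := by
    refine eq_of_subset_of_card_le (fun y hy => ?_) (by simpa using hdeg w)
    obtain ⟨w', hw', rfl⟩ := mem_map.mp hy
    rw [mem_neighborFinset]
    exact f.toHom.map_adj ((mem_neighborFinset _ _ _).mp hw')
  have hadj {w : W} {y : V} (h : G.Adj (f w) y) : ∃ w', K.Adj w w' ∧ f w' = y := by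
    have := (mem_neighborFinset _ _ _).mpr h
    rw [← hN, mem_map] at this
    obtain ⟨w', hw', rfl⟩ := this
    exact ⟨w', (mem_neighborFinset _ _ _).mp hw', rfl⟩
  have hsurj : Function.Surjective f := by
    intro y
    obtain ⟨w₀⟩ := ‹Nonempty W›
    by_contra hy
    obtain ⟨d, -, ⟨w, hw⟩, hd⟩ := (hG (f w₀) y).some.exists_boundary_dart (Set.range f) ⟨w₀, rfl⟩
      (by simpa using hy)
    obtain ⟨w', -, hw'⟩ := hadj (hw ▸ d.adj)
    exact hd ⟨w', hw'⟩
  refine ⟨⟨Equiv.ofBijective f ⟨f.injective, hsurj⟩, fun {a b} => ⟨fun h => ?_, f.toHom.map_adj⟩⟩⟩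
  obtain ⟨w', hw', hfw'⟩ := hadj h
  exact f.injective hfw' ▸ hw'

theorem Connected.exists_iso_cycleGraph [Fintype V] [DecidableRel G.Adj] (hG : G.Connected)
    (hreg : G.IsRegularOfDegree 2) : ∃ n, Nonempty (G ≃g cycleGraph n) := by
  have hcyc : ¬ G.IsAcyclic := fun hacyc => by
    obtain ⟨v⟩ := hG.nonempty
    obtain ⟨w, hw⟩ := (G.degree_pos_iff_exists_adj v).mp (by rw [hreg v]; omega)
    have : Nontrivial V := ⟨v, w, hw.ne⟩
    obtain ⟨u, hu⟩ := IsTree.exists_vert_degree_one_of_nontrivial ⟨hG, hacyc⟩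
    exact absurd (hreg u) (by omega)
  obtain ⟨n, hn, ⟨f⟩⟩ : ∃ n ≥ 3, cycleGraph n ⊑ G := by
    simpa [isAcyclic_iff_free_cycleGraph] using hcyc
  obtain ⟨m, rfl⟩ : ∃ m, n = m + 3 := ⟨n - 3, by omega⟩
  obtain ⟨e⟩ := f.nonempty_iso_of_degree_le hG fun w => by
    rw [hreg (f w), cycleGraph_degree_three_le]
  exact ⟨_, ⟨e.symm⟩⟩

end SimpleGraph

/-- **Brooks' theorem.** If a finite simple graph `G` is connected, not complete,
and not (isomorphic to) an odd cycle, then its chromatic number is at most its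
maximum degree. -/
theorem brooks {V : Type*} [Fintype V] (G : SimpleGraph V) [DecidableRel G.Adj]
    (hconn : G.Connected) (hnc : G ≠ ⊤)
    (hnodd : ¬ ∃ n : ℕ, Odd n ∧ Nonempty (G ≃g SimpleGraph.cycleGraph n)) :
    G.chromaticNumber ≤ G.maxDegree := by
  suffices G.Colorable G.maxDegree from this.chromaticNumber_le
  have hdeg := G.degree_le_maxDegree
  by_cases hlt : ∃ r, G.degree r < G.maxDegree
  · obtain ⟨r, hr⟩ := hlt
    exact hconn.colorable_of_degree_lt hdeg hr
  have hreg : G.IsRegularOfDegree G.maxDegree := fun v =>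
    (hdeg v).antisymm (not_lt.mp fun h => hlt ⟨v, h⟩)
  obtain ⟨x, v, b, hxv, hvb, -, hxb⟩ := hconn.exists_adj_adj_not_adj hnc
  rcases (hreg v ▸ SimpleGraph.two_le_degree_of_adj hxv.symm hvb hxb).eq_or_lt with h2 | h3
  · obtain ⟨n, ⟨e⟩⟩ := hconn.exists_iso_cycleGraph (h2 ▸ hreg)
    have hn : Even n := Nat.not_odd_iff_even.mp fun hn => hnodd ⟨n, hn, ⟨e⟩⟩
    rw [← h2]
    simpa using (SimpleGraph.cycleGraph.bicoloring_of_even n hn).colorable.of_hom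
      e.toEmbedding.toHom
  by_cases hcut : ∀ z, G.PreconnectedIn {z}ᶜ
  · obtain ⟨v, a, b, hva, hvb, hab, hnab, hreach⟩ :=
      hconn.exists_adj_adj_reachableIn_compl_pair hnc hcut fun v => hreg v ▸ h3
    exact SimpleGraph.colorable_of_reachableIn_compl_pair hdeg hva hvb hab hnab hreach
  simp only [SimpleGraph.PreconnectedIn, not_forall] at hcut
  obtain ⟨z, u, hu, t, ht, h⟩ := hcut
  exact hconn.colorable_of_not_reachableIn hdeg hu ht h
end

section
/- For any finite simple graph G with vertices v_1,...,v_n ordered so that deg(v_1) ≥ deg(v_2) ≥ ... ≥ deg(v_n), there exists a proper vertex coloring of G using at most max_{1≤i≤n} min(deg(v_i)+1, i) colors; consequently χ(G) ≤ max_{1≤i≤n} min(deg(v_i)+1, i). -/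
/-!
Color the vertices greedily in the given order, each one with the least color not used by
its earlier neighbours. The `i`-th vertex `v i` has at most `min (deg (v i)) i` earlier
neighbours, so its color is at most `min (deg (v i)) i`, i.e. among the first
`min (deg (v i) + 1) (i + 1)` colors.
-/

open Finset

namespace SimpleGraph

variable {V : Type*} [LinearOrder V] [WellFoundedLT V] (G : SimpleGraph V)

noncomputable def greedyColor : V → ℕ :=
  WellFoundedLT.fix fun x color => sInf {c | ∀ y (hy : y < x), G.Adj y x → color y hy ≠ c}

theorem greedyColor_eq (x : V) :
    G.greedyColor x = sInf {c | ∀ y < x, G.Adj y x → G.greedyColor y ≠ c} :=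
  WellFoundedLT.fix_eq _ x

variable [LocallyFinite G]

theorem exists_color_avoiding_earlier_neighbors (x : V) :
    ∃ c ≤ #{y ∈ G.neighborFinset x | y < x}, ∀ y < x, G.Adj y x → G.greedyColor y ≠ c := by
  set earlier := {y ∈ G.neighborFinset x | y < x}
  -- pigeonhole: the earlier neighbours cannot use all of the colors `0, …, #earlier`
  have hcard : #(earlier.image G.greedyColor) < #(range (#earlier + 1)) := by
    rw [card_range]; exact Nat.lt_succ_of_le card_image_le
  obtain ⟨c, hc, hcnot⟩ := exists_mem_notMem_of_card_lt_card hcard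
  refine ⟨c, Nat.lt_succ_iff.mp (mem_range.mp hc), fun y hy hadj hyc => hcnot ?_⟩
  exact hyc ▸ mem_image_of_mem _ (by simp [earlier, hy, hadj.symm])

theorem greedyColor_le_card_earlier_neighbors (x : V) :
    G.greedyColor x ≤ #{y ∈ G.neighborFinset x | y < x} := by
  obtain ⟨c, hc, havoid⟩ := G.exists_color_avoiding_earlier_neighbors x
  rw [greedyColor_eq]
  exact le_trans (Nat.sInf_le havoid) hc

theorem greedyColor_ne_of_adj {x y : V} (hadj : G.Adj x y) :
    G.greedyColor x ≠ G.greedyColor y := by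
  wlog hlt : y < x generalizing x y
  · exact (this hadj.symm (lt_of_le_of_ne (not_lt.mp hlt) hadj.ne)).symm
  obtain ⟨c, -, havoid⟩ := G.exists_color_avoiding_earlier_neighbors x
  have hmem : G.greedyColor x ∈ {c | ∀ y < x, G.Adj y x → G.greedyColor y ≠ c} :=
    G.greedyColor_eq x ▸ Nat.sInf_mem ⟨c, havoid⟩
  exact (hmem y hlt hadj.symm).symm

noncomputable def greedyColoring : G.Coloring ℕ :=
  Coloring.mk G.greedyColor G.greedyColor_ne_of_adj

theorem colorable_of_card_earlier_neighbors_lt {k : ℕ}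
    (h : ∀ x, #{y ∈ G.neighborFinset x | y < x} < k) : G.Colorable k :=
  (colorable_iff_exists_bdd_nat_coloring k).mpr
    ⟨G.greedyColoring, fun x => (G.greedyColor_le_card_earlier_neighbors x).trans_lt (h x)⟩

end SimpleGraph

theorem welsh_powell_general {V : Type*} [Fintype V] (G : SimpleGraph V) [DecidableRel G.Adj]
    (n : ℕ) (v : Fin n ≃ V) :
    G.Colorable (Finset.univ.sup fun i : Fin n => min (G.degree (v i) + 1) (i.1 + 1)) ∧
      G.chromaticNumber ≤
        (Finset.univ.sup fun i : Fin n => min (G.degree (v i) + 1) (i.1 + 1)) := by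
  set K := Finset.univ.sup fun i : Fin n => min (G.degree (v i) + 1) (i.1 + 1)
  have hcomap : (G.comap v).Colorable K := by
    refine (G.comap v).colorable_of_card_earlier_neighbors_lt fun i => ?_
    have hdeg : #{j ∈ (G.comap v).neighborFinset i | j < i} ≤ G.degree (v i) :=
      (card_filter_le _ _).trans ((SimpleGraph.Iso.comap v G).degree_eq i).ge
    have hidx : #{j ∈ (G.comap v).neighborFinset i | j < i} ≤ i := by
      simpa using card_le_card (t := Iio i) fun j hj => mem_Iio.mpr (mem_filter.mp hj).2
    have hK : min (G.degree (v i) + 1) (i.1 + 1) ≤ K :=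
      le_sup (f := fun i : Fin n => min (G.degree (v i) + 1) (i.1 + 1)) (mem_univ i)
    omega
  have hcol : G.Colorable K := (SimpleGraph.colorable_congr (SimpleGraph.Iso.comap v G)).mp hcomap
  exact ⟨hcol, hcol.chromaticNumber_le⟩

/-- **Welsh–Powell bound.** If the vertices `v 0, v 1, ..., v (n-1)` of a finite
simple graph are listed in non-increasing order of degree, then `G` has a proper
coloring with at most `max_i min (deg (v i) + 1) (i + 1)` colors, and hence the
chromatic number is bounded by this quantity. -/
theorem welsh_powell {V : Type*} [Fintype V] (G : SimpleGraph V) [DecidableRel G.Adj]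
    (n : ℕ) (v : Fin n ≃ V)
    (hsorted : ∀ i j : Fin n, i ≤ j → G.degree (v j) ≤ G.degree (v i)) :
    G.Colorable (Finset.univ.sup fun i : Fin n => min (G.degree (v i) + 1) (i.1 + 1)) ∧
      G.chromaticNumber ≤
        (Finset.univ.sup fun i : Fin n => min (G.degree (v i) + 1) (i.1 + 1)) :=
  welsh_powell_general G n v
end
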